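/- arXiv:1502.02643 — 2 statements merged into one kernel-verified Lean document; each statement's English description precedes it below -/
import Mathlib

section
/- Fix a starting point y₀ ∈ 𝒴. For an index sequence (i₀, i₁, …) with each iₖ ∈ {1,…,r}, define iterates by: y_{k+1} agrees with y_k in every block except block i_k, and y_{k+1}^{(i_k)} is the unique minimizer over z ∈ B(F_{i_k}) of ⟨∇_{i_k} g(y_k), z − y_k^{(i_k)}⟩ + ‖z − y_k^{(i_k)}‖². Then for every k ≥ 0, the average over all index sequences (i₀,…,i_k) ∈ {1,…,r}^{k+1} (each with weight r^{−(k+1)}) of d(y_{k+1}, E)² + g(y_{k+1}) − g* is at most (1 − 2/(n²r² + r))^{k+1} · ( d(y₀, E)² + g(y₀) − g* ). -/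
open scoped RealInnerProductSpace Pointwise

noncomputable section

/-- A set function on the ground set `V = {1,…,n}` (modeled as `Fin n`) is submodular if
`F(A ∩ B) + F(A ∪ B) ≤ F(A) + F(B)` for all `A, B ⊆ V`. -/
def Submodular {n : ℕ} (F : Finset (Fin n) → ℝ) : Prop :=
  ∀ A B : Finset (Fin n), F (A ∩ B) + F (A ∪ B) ≤ F A + F B

/-- The base polytope `B(F) = {w ∈ ℝⁿ | ∀ A ⊆ V, w(A) ≤ F(A), and w(V) = F(V)}`. -/
def basePolytope (n : ℕ) (F : Finset (Fin n) → ℝ) : Set (EuclideanSpace ℝ (Fin n)) :=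
  {w | (∀ A : Finset (Fin n), ∑ i ∈ A, w i ≤ F A) ∧ (∑ i, w i = F Finset.univ)}

/-- `ℝ^{nr}` with the Euclidean norm, written in `r` blocks of `n` coordinates. -/
abbrev Vec (n r : ℕ) := PiLp 2 (fun _ : Fin r => EuclideanSpace ℝ (Fin n))

/-- The feasible set `𝒴 = ∏ᵢ B(Fᵢ)` of (Prox-DSM). -/
def feas (n r : ℕ) (F : Fin r → Finset (Fin n) → ℝ) : Set (Vec n r) :=
  {y | ∀ i, y i ∈ basePolytope n (F i)}

/-- The objective `g(y) = ‖∑ᵢ y⁽ⁱ⁾‖²` of (Prox-DSM). -/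
def g (n r : ℕ) (y : Vec n r) : ℝ := ‖∑ i, y i‖ ^ 2

/-- The `i`-th block of the gradient of `g`: `∇ᵢ g(y) = 2 ∑ⱼ y⁽ʲ⁾` (the same for every `i`). -/
def gradBlock (n r : ℕ) (y : Vec n r) : EuclideanSpace ℝ (Fin n) := (2 : ℝ) • ∑ j, y j

/-- The full gradient `∇g(y) ∈ ℝ^{nr}`, whose every block equals `2 ∑ⱼ y⁽ʲ⁾`. -/
def gradg (n r : ℕ) (y : Vec n r) : Vec n r := WithLp.toLp 2 (fun _ => gradBlock n r y)

/-- `y` is an optimal solution of (Prox-DSM). -/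
def IsOptimal (n r : ℕ) (F : Fin r → Finset (Fin n) → ℝ) (y : Vec n r) : Prop :=
  y ∈ feas n r F ∧ ∀ z ∈ feas n r F, g n r y ≤ g n r z

/-- The linear map `S = (1/√r)[Iₙ Iₙ ⋯ Iₙ]`, i.e. `S y = (1/√r) ∑ᵢ y⁽ⁱ⁾`. -/
def Smap (n r : ℕ) (y : Vec n r) : EuclideanSpace ℝ (Fin n) := (Real.sqrt r)⁻¹ • ∑ i, y i

/-- Distance between two sets: `d(K₁, K₂) = inf{‖k₁ - k₂‖ : k₁ ∈ K₁, k₂ ∈ K₂}`. -/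
def setDist {E : Type*} [PseudoMetricSpace E] (A B : Set E) : ℝ :=
  sInf ((fun p : E × E => dist p.1 p.2) '' (A ×ˢ B))

/-- The RCDM iterate after applying the block updates indexed by `s 0, s 1, …, s (k-1)`
(in this order), where `T y i` is the vector obtained from `y` by replacing block `i`
with the block minimizer. -/
def rcdmIter (n r : ℕ) (T : Vec n r → Fin r → Vec n r) (y0 : Vec n r) :
    (k : ℕ) → (Fin k → Fin r) → Vec n r
  | 0, _ => y0
  | k + 1, s => T (rcdmIter n r T y0 k (fun j => s j.castSucc)) (s (Fin.last k))


/-!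
Write `a = ∑ᵢ y⁽ⁱ⁾` and let `p` be a point of `E` nearest to `y`, with block sum `a*`. The block
step `i` is the projection of `y⁽ⁱ⁾ - a` onto `B(Fᵢ)`, so the obtuse-angle inequality of
projections gives `d(yᵢ', E)² + g(yᵢ') ≤ ‖y - p‖² + g(y) + 2⟪a, p⁽ⁱ⁾ - y⁽ⁱ⁾⟫`. Summed over `i`, the
cross terms add up to `-(g(y) - g* + ‖a - a*‖²)`. Two bounds close the recursion: `‖a - a*‖² ≤
g(y) - g*`, since `a*` is the projection of `0` onto the convex set of block sums, and the
Hoffman-type bound `d(y, E) ≤ n √r ‖a - a*‖`.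

For the latter, minimize `‖y - u‖ + n √r ‖∑ᵢ u⁽ⁱ⁾ - a*‖` over the compact set `𝒴`. Tight sets of a
point of `B(F)` form a lattice, so a set of coordinates that no exchange arc enters is tight in
every block and carries nonnegative residual. Hence at a minimizer with nonzero residual some
coordinate of positive residual reaches one of negative residual in the exchange graph. Pushing
mass along a shortest such path is a direction of norm at most `√(nr)` that lowers the residual
norm at rate `(residual gap) / ‖residual‖ > 1 / √n`, so it decreases the objective to first order.
-/

open Finset Filter Topology

section Generic

variable {V W : Type*} [NormedAddCommGroup V] [NormedSpace ℝ V]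
  [NormedAddCommGroup W] [InnerProductSpace ℝ W]

lemma norm_sub_sq_add_norm_sub_sq_le {K : Set W} (hK : Convex ℝ K) {x u p : W} (hu : u ∈ K)
    (hp : p ∈ K) (hmin : ∀ z ∈ K, ‖x - u‖ ≤ ‖x - z‖) :
    ‖x - u‖ ^ 2 + ‖u - p‖ ^ 2 ≤ ‖x - p‖ ^ 2 := by
  have : Nonempty K := ⟨⟨u, hu⟩⟩
  have hinf : ‖x - u‖ = ⨅ z : K, ‖x - z‖ :=
    le_antisymm (le_ciInf fun z => hmin z z.2)
      (ciInf_le ⟨0, by rintro _ ⟨z, rfl⟩; positivity⟩ (⟨u, hu⟩ : K))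
  have hobtuse := (norm_eq_iInf_iff_real_inner_le_zero hK hu).1 hinf p hp
  rw [show x - p = (x - u) - (p - u) by abel, norm_sub_sq_real (x - u), norm_sub_rev u p]
  linarith

lemma norm_add_smul_le_of_ne_zero {R : W} (hR : R ≠ 0) (d : W) (τ : ℝ) :
    ‖R + τ • d‖ ≤ ‖R‖ + τ * ⟪R, d⟫ / ‖R‖ + τ ^ 2 * ‖d‖ ^ 2 / (2 * ‖R‖) := by
  have ha : 0 < ‖R‖ := norm_pos_iff.2 hR
  set b := τ * ⟪R, d⟫ / ‖R‖ + τ ^ 2 * ‖d‖ ^ 2 / (2 * ‖R‖)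
  have hsq : ‖R + τ • d‖ ^ 2 = ‖R‖ ^ 2 + 2 * ‖R‖ * b := by
    rw [norm_add_sq_real, real_inner_smul_right, norm_smul, mul_pow, Real.norm_eq_abs, sq_abs]
    simp only [b]
    field_simp
    ring
  have hb : 0 ≤ ‖R‖ + b := by nlinarith [sq_nonneg ‖R + τ • d‖]
  rw [add_assoc]
  exact le_of_pow_le_pow_left₀ two_ne_zero hb (by nlinarith [sq_nonneg b])

lemma eventually_norm_sub_smul_add_lt (x Δ : V) {R : W} (hR : R ≠ 0) (d : W) {lam : ℝ}
    (hlam : 0 ≤ lam) (h : ‖Δ‖ * ‖R‖ < -(lam * ⟪R, d⟫)) :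
    ∀ᶠ τ in 𝓝[>] (0 : ℝ), ‖x - τ • Δ‖ + lam * ‖R + τ • d‖ < ‖x‖ + lam * ‖R‖ := by
  have ha : 0 < ‖R‖ := norm_pos_iff.2 hR
  have hsmall : ∀ᶠ τ in 𝓝[>] (0 : ℝ), τ * (lam * ‖d‖ ^ 2 / 2) < -(lam * ⟪R, d⟫) - ‖Δ‖ * ‖R‖ :=
    nhdsWithin_le_nhds <| ContinuousAt.eventually_lt (by fun_prop) continuousAt_const
      (by simpa using h)
  filter_upwards [self_mem_nhdsWithin, hsmall] with τ (hτ : 0 < τ) hτsmall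
  have hx : ‖x - τ • Δ‖ ≤ ‖x‖ + τ * ‖Δ‖ := by
    simpa [norm_smul, abs_of_pos hτ] using norm_sub_le x (τ • Δ)
  have hR' := mul_le_mul_of_nonneg_left (norm_add_smul_le_of_ne_zero hR d τ) hlam
  have hkey : lam * (τ * ⟪R, d⟫ / ‖R‖ + τ ^ 2 * ‖d‖ ^ 2 / (2 * ‖R‖)) + τ * ‖Δ‖ < 0 := by
    rw [← mul_lt_mul_iff_of_pos_left ha]
    field_simp
    nlinarith [mul_lt_mul_of_pos_left hτsmall hτ]
  nlinarith

/-- Take a minimizer of `u ↦ ‖y - u‖ + lam * ‖L u - b‖` on `S`: off the fibre it would admit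
a descent direction. -/
theorem exists_map_eq_norm_sub_le_of_descent {S : Set V} (hS : IsCompact S) (L : V →L[ℝ] W)
    (b : W) {lam : ℝ} (hlam : 0 ≤ lam)
    (hdesc : ∀ u ∈ S, L u ≠ b → ∃ Δ, (∀ᶠ τ in 𝓝[>] (0 : ℝ), u + τ • Δ ∈ S) ∧
      ‖Δ‖ * ‖L u - b‖ < -(lam * ⟪L u - b, L Δ⟫))
    {y : V} (hy : y ∈ S) : ∃ q ∈ S, L q = b ∧ ‖y - q‖ ≤ lam * ‖L y - b‖ := by
  obtain ⟨u, hu, hmin⟩ := hS.exists_isMinOn ⟨y, hy⟩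
    (f := fun u => ‖y - u‖ + lam * ‖L u - b‖) (by fun_prop)
  by_cases hLu : L u = b
  · exact ⟨u, hu, hLu, by simpa [hLu] using isMinOn_iff.1 hmin y hy⟩
  obtain ⟨Δ, hfeas, hΔ⟩ := hdesc u hu hLu
  obtain ⟨τ, hτS, hτ⟩ := (hfeas.and <| eventually_norm_sub_smul_add_lt (y - u) Δ
    (sub_ne_zero.2 hLu) (L Δ) hlam hΔ).exists
  have := isMinOn_iff.1 hmin _ hτS
  simp only [map_add, map_smul, sub_add_eq_sub_sub, add_sub_right_comm] at this
  linarith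

end Generic

section Paths

variable {α : Type*} {rel : α → α → Prop}

lemma exists_path_of_reflTransGen {a b : α} (h : Relation.ReflTransGen rel a b) :
    ∃ (m : ℕ) (γ : ℕ → α), γ 0 = a ∧ γ m = b ∧ ∀ k < m, rel (γ k) (γ (k + 1)) := by
  induction h with
  | refl => exact ⟨0, fun _ => a, rfl, rfl, by simp⟩
  | @tail b c _ hbc ih =>
    obtain ⟨m, γ, h0, hm, hγ⟩ := ih
    refine ⟨m + 1, fun k => if k ≤ m then γ k else c, by simpa using h0, by simp, fun k hk => ?_⟩
    rcases Nat.lt_or_ge k m with hkm | hkm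
    · simpa [hkm.le, Nat.succ_le_of_lt hkm] using hγ k hkm
    · obtain rfl : k = m := by omega
      simpa [hm] using hbc

/-- A shortest path has no repeated vertices. -/
lemma exists_injOn_path_of_reflTransGen {a b : α} (h : Relation.ReflTransGen rel a b) :
    ∃ (m : ℕ) (γ : ℕ → α), γ 0 = a ∧ γ m = b ∧ (∀ k < m, rel (γ k) (γ (k + 1))) ∧
      Set.InjOn γ (Set.Iic m) := by
  classical
  have hex := exists_path_of_reflTransGen h
  obtain ⟨γ, h0, hm, hγ⟩ := Nat.find_spec hex
  refine ⟨_, γ, h0, hm, hγ, ?_⟩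
  by_contra hinj
  obtain ⟨i, hi, j, hj, hij, hne⟩ : ∃ i, i ≤ Nat.find hex ∧ ∃ j, j ≤ Nat.find hex ∧
      γ i = γ j ∧ i < j := by
    simp only [Set.InjOn, Set.mem_Iic, not_forall] at hinj
    obtain ⟨i, hi, j, hj, hij, hne⟩ := hinj
    rcases Nat.lt_or_gt_of_ne hne with hlt | hlt
    · exact ⟨i, hi, j, hj, hij, hlt⟩
    · exact ⟨j, hj, i, hi, hij.symm, hlt⟩
  -- cut out the loop between the two visits
  refine Nat.find_min hex (m := Nat.find hex - (j - i)) (by omega)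
    ⟨fun k => if k ≤ i then γ k else γ (k + (j - i)), by simpa using h0, ?_, fun k hk => ?_⟩
  · dsimp only
    split_ifs with hle
    · obtain rfl : j = Nat.find hex := by omega
      rw [show Nat.find hex - (Nat.find hex - i) = i by omega, hij, hm]
    · rw [show Nat.find hex - (j - i) + (j - i) = Nat.find hex by omega, hm]
  · rcases lt_trichotomy k i with hki | rfl | hki
    · simpa [hki.le, Nat.succ_le_of_lt hki] using hγ k (by omega)
    · simpa [hij, show k + 1 + (j - k) = j + 1 by omega] using hγ j (by omega)
    · dsimp only
      rw [if_neg (by omega), if_neg (by omega), show k + 1 + (j - i) = k + (j - i) + 1 by omega]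
      exact hγ _ (by omega)

lemma card_filter_apply_eq_le_one {ι α : Type*} [DecidableEq α] {f : ι → α} {s : Finset ι}
    (hf : Set.InjOn f s) (a : α) : #{x ∈ s | f x = a} ≤ 1 :=
  card_le_one.2 fun _ hx _ hy =>
    hf (mem_filter.1 hx).1 (mem_filter.1 hy).1 ((mem_filter.1 hx).2.trans (mem_filter.1 hy).2.symm)

end Paths

section BasePolytope

variable {n : ℕ} {F : Finset (Fin n) → ℝ} {w : EuclideanSpace ℝ (Fin n)}

lemma norm_sq_le_of_forall_abs_apply_le {x : EuclideanSpace ℝ (Fin n)} {c : ℝ}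
    (h : ∀ e, |x e| ≤ c) : ‖x‖ ^ 2 ≤ n * c ^ 2 := by
  rw [EuclideanSpace.norm_sq_eq]
  calc ∑ e, ‖x e‖ ^ 2 ≤ ∑ _e : Fin n, c ^ 2 :=
        sum_le_sum fun e _ => by simpa using sq_le_sq' (neg_le_of_abs_le (h e)) (le_of_abs_le (h e))
    _ = n * c ^ 2 := by simp

def IsTight (F : Finset (Fin n) → ℝ) (w : EuclideanSpace ℝ (Fin n)) (A : Finset (Fin n)) : Prop :=
  ∑ e ∈ A, w e = F A

lemma IsTight.inter_union (hF : Submodular F) (hw : w ∈ basePolytope n F) {A B : Finset (Fin n)}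
    (hA : IsTight F w A) (hB : IsTight F w B) : IsTight F w (A ∩ B) ∧ IsTight F w (A ∪ B) := by
  have hmod : ∑ e ∈ A ∪ B, w e + ∑ e ∈ A ∩ B, w e = ∑ e ∈ A, w e + ∑ e ∈ B, w e :=
    sum_union_inter
  unfold IsTight at *
  constructor <;> linarith [hw.1 (A ∩ B), hw.1 (A ∪ B), hF A B]

open Classical in
/-- Written `dep(w, f)` in the literature. -/
def tightClosure (F : Finset (Fin n) → ℝ) (w : EuclideanSpace ℝ (Fin n)) (f : Fin n) :
    Finset (Fin n) :=
  (univ.filter fun A => IsTight F w A ∧ f ∈ A).inf id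

lemma mem_tightClosure {e f : Fin n} :
    e ∈ tightClosure F w f ↔ ∀ A, IsTight F w A → f ∈ A → e ∈ A := by
  simp [tightClosure, mem_inf]

lemma mem_tightClosure_self (f : Fin n) : f ∈ tightClosure F w f :=
  mem_tightClosure.2 fun _ _ hf => hf

lemma isTight_tightClosure (hF : Submodular F) (hw : w ∈ basePolytope n F) (f : Fin n) :
    IsTight F w (tightClosure F w f) := by
  classical
  unfold tightClosure
  exact inf_induction hw.2 (fun _ h₁ _ h₂ => IsTight.inter_union hF hw h₁ h₂ |>.1) fun _ hA => by
    simpa using (mem_filter.1 hA).2.1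

lemma isTight_of_tightClosure_subset (hF : Submodular F) (hw : w ∈ basePolytope n F)
    {T : Finset (Fin n)} (hT : T.Nonempty) (h : ∀ f ∈ T, tightClosure F w f ⊆ T) :
    IsTight F w T := by
  have hsup : T.sup' hT (tightClosure F w) = T := by
    ext e
    rw [mem_sup']
    exact ⟨fun ⟨f, hf, he⟩ => h f hf he, fun he => ⟨e, he, mem_tightClosure_self e⟩⟩
  rw [← hsup]
  exact sup'_induction hT _ (fun _ h₁ _ h₂ => (h₁.inter_union hF hw h₂).2)
    fun f _ => isTight_tightClosure hF hw f

lemma sum_add_smul_apply (A : Finset (Fin n)) (v d : EuclideanSpace ℝ (Fin n)) (τ : ℝ) :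
    ∑ e ∈ A, (v + τ • d) e = ∑ e ∈ A, v e + τ * ∑ e ∈ A, d e := by
  simp [sum_add_distrib, mul_sum]

lemma eventually_add_smul_mem_basePolytope (hw : w ∈ basePolytope n F)
    {d : EuclideanSpace ℝ (Fin n)} (hd : ∑ e, d e = 0)
    (htight : ∀ A, IsTight F w A → ∑ e ∈ A, d e ≤ 0) :
    ∀ᶠ τ in 𝓝[>] (0 : ℝ), w + τ • d ∈ basePolytope n F := by
  simp only [basePolytope, Set.mem_ofPred_eq, sum_add_smul_apply, hd, mul_zero, add_zero, hw.2,
    and_true]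
  refine eventually_all.2 fun A => ?_
  by_cases hA : IsTight F w A
  · filter_upwards [self_mem_nhdsWithin] with τ (hτ : 0 < τ)
    nlinarith [htight A hA, hA.le]
  · have hlt : ∑ e ∈ A, w e < F A := lt_of_le_of_ne (hw.1 A) hA
    refine nhdsWithin_le_nhds <| (ContinuousAt.eventually_lt (g := fun _ => F A)
      (f := fun τ : ℝ => ∑ e ∈ A, w e + τ * ∑ e ∈ A, d e) (by fun_prop) continuousAt_const
      (by simpa using hlt)).mono fun _ h => h.le

lemma convex_basePolytope (F : Finset (Fin n) → ℝ) : Convex ℝ (basePolytope n F) := by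
  intro u hu v hv a b ha hb hab
  have hsum (A : Finset (Fin n)) :
      ∑ e ∈ A, (a • u + b • v) e = a * ∑ e ∈ A, u e + b * ∑ e ∈ A, v e := by
    simp [sum_add_distrib, mul_sum]
  refine ⟨fun A => ?_, ?_⟩
  · rw [hsum]
    have hFA : a * F A + b * F A = F A := by rw [← add_mul, hab, one_mul]
    nlinarith [mul_le_mul_of_nonneg_left (hu.1 A) ha, mul_le_mul_of_nonneg_left (hv.1 A) hb]
  · rw [hsum, hu.2, hv.2, ← add_mul, hab, one_mul]

lemma isCompact_basePolytope (F : Finset (Fin n) → ℝ) : IsCompact (basePolytope n F) := by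
  have hclosed : IsClosed (basePolytope n F) := by
    simp only [basePolytope, Set.ofPred_and, Set.ofPred_forall]
    exact (isClosed_iInter fun A => isClosed_le (by fun_prop) continuous_const).inter
      (isClosed_eq (by fun_prop) continuous_const)
  refine ((isCompact_univ_pi fun e => isCompact_Icc (a := F univ - F (univ.erase e))
    (b := F {e})).image (PiLp.continuous_toLp 2 _)).of_isClosed_subset hclosed fun w hw =>
      ⟨w.ofLp, fun e _ => ⟨?_, ?_⟩, rfl⟩
  · linarith [add_sum_erase univ w (mem_univ e), hw.1 (univ.erase e), hw.2]
  · simpa using hw.1 {e}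

end BasePolytope

section FeasibleSet

variable {n r : ℕ}

def blockSum (n r : ℕ) : Vec n r →L[ℝ] EuclideanSpace ℝ (Fin n) :=
  ∑ i, PiLp.proj 2 (fun _ : Fin r => EuclideanSpace ℝ (Fin n)) i

@[simp] lemma blockSum_apply (y : Vec n r) : blockSum n r y = ∑ i, y i := by
  simp [blockSum]

lemma convex_feas (F : Fin r → Finset (Fin n) → ℝ) : Convex ℝ (feas n r F) :=
  fun _ hu _ hv _ _ ha hb hab i => convex_basePolytope (F i) (hu i) (hv i) ha hb hab

lemma isCompact_feas (F : Fin r → Finset (Fin n) → ℝ) : IsCompact (feas n r F) := by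
  have : feas n r F = WithLp.toLp 2 '' Set.univ.pi fun i => basePolytope n (F i) := by
    ext y
    exact ⟨fun hy => ⟨y.ofLp, fun i _ => hy i, rfl⟩, by rintro ⟨x, hx, rfl⟩ i; exact hx i trivial⟩
  rw [this]
  exact (isCompact_univ_pi fun i => isCompact_basePolytope _).image (PiLp.continuous_toLp 2 _)

end FeasibleSet

section ExchangeGraph

variable {n r : ℕ} {F : Fin r → Finset (Fin n) → ℝ} {u p : Vec n r}

/-- Mass can be moved from `e` to `f` in some block without leaving the base polytope. -/
def ExchangeArc (F : Fin r → Finset (Fin n) → ℝ) (u : Vec n r) (e f : Fin n) : Prop :=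
  ∃ i, e ∈ tightClosure (F i) (u i) f

lemma sum_residual_eq_zero (hu : u ∈ feas n r F) (hp : p ∈ feas n r F) :
    ∑ e, (∑ i, u i - ∑ i, p i) e = 0 := by
  have hu' (i : Fin r) : ∑ e, u i e = F i univ := (hu i).2
  have hp' (i : Fin r) : ∑ e, p i e = F i univ := (hp i).2
  simp [sum_sub_distrib, sum_comm (s := (univ : Finset (Fin n))), hu', hp']

/-- `T` is tight in every block of `u`. -/
lemma sum_residual_nonneg (hsub : ∀ i, Submodular (F i)) (hu : u ∈ feas n r F)
    (hp : p ∈ feas n r F) {T : Finset (Fin n)}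
    (hT : ∀ e f, ExchangeArc F u e f → f ∈ T → e ∈ T) :
    0 ≤ ∑ e ∈ T, (∑ i, u i - ∑ i, p i) e := by
  rcases T.eq_empty_or_nonempty with rfl | hne
  · simp
  have htight (i : Fin r) : ∑ e ∈ T, u i e = F i T :=
    isTight_of_tightClosure_subset (hsub i) (hu i) hne fun f hf e he => hT e f ⟨i, he⟩ hf
  have hsum : ∑ e ∈ T, (∑ i, u i - ∑ i, p i) e = ∑ i, (F i T - ∑ e ∈ T, p i e) := by
    simp [sum_sub_distrib, sum_comm (s := T), htight]
  rw [hsum]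
  exact sum_nonneg fun i _ => sub_nonneg.2 ((hp i).1 T)

lemma exists_reflTransGen_residual_neg (hsub : ∀ i, Submodular (F i)) (hu : u ∈ feas n r F)
    (hp : p ∈ feas n r F) {s : Fin n} (hs : 0 < (∑ i, u i - ∑ i, p i) s) :
    ∃ t, Relation.ReflTransGen (ExchangeArc F u) s t ∧ (∑ i, u i - ∑ i, p i) t < 0 := by
  classical
  by_contra! h
  set T := univ.filter fun t => ¬ Relation.ReflTransGen (ExchangeArc F u) s t
  have hT := sum_residual_nonneg hsub hu hp (T := T) fun e f hef hf => by
    simp only [T, mem_filter, mem_univ, true_and] at hf ⊢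
    exact fun he => hf (he.tail hef)
  have hTc : 0 < ∑ e ∈ Tᶜ, (∑ i, u i - ∑ i, p i) e :=
    sum_pos' (fun t ht => h t (by simpa [T] using ht))
      ⟨s, by simp [T, Relation.ReflTransGen.refl], hs⟩
  linarith [sum_add_sum_compl T (∑ i, u i - ∑ i, p i), sum_residual_eq_zero hu hp]

lemma exists_reflTransGen_residual_pos (hsub : ∀ i, Submodular (F i)) (hu : u ∈ feas n r F)
    (hp : p ∈ feas n r F) {t : Fin n} (ht : (∑ i, u i - ∑ i, p i) t < 0) :
    ∃ s, Relation.ReflTransGen (ExchangeArc F u) s t ∧ 0 < (∑ i, u i - ∑ i, p i) s := by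
  classical
  by_contra! h
  set T := univ.filter fun s => Relation.ReflTransGen (ExchangeArc F u) s t
  have hT := sum_residual_nonneg hsub hu hp (T := T) fun e f hef hf => by
    simp only [T, mem_filter, mem_univ, true_and] at hf ⊢
    exact hf.head hef
  have hneg : ∑ e ∈ T, (∑ i, u i - ∑ i, p i) e < 0 := by
    rw [← neg_pos, ← sum_neg_distrib]
    exact sum_pos' (fun s hs => neg_nonneg.2 (h s (by simpa [T] using hs)))
      ⟨t, by simp [T, Relation.ReflTransGen.refl], neg_pos.2 ht⟩
  linarith

lemma exists_reflTransGen_residual_gap (hsub : ∀ i, Submodular (F i)) (hu : u ∈ feas n r F)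
    (hp : p ∈ feas n r F) {e : Fin n} (he : (∑ i, u i - ∑ i, p i) e ≠ 0) :
    ∃ s t, Relation.ReflTransGen (ExchangeArc F u) s t ∧ 0 < (∑ i, u i - ∑ i, p i) s ∧
      (∑ i, u i - ∑ i, p i) t < 0 ∧
      |(∑ i, u i - ∑ i, p i) e| < (∑ i, u i - ∑ i, p i) s - (∑ i, u i - ∑ i, p i) t := by
  rcases he.lt_or_gt with hneg | hpos
  · obtain ⟨s, hst, hs⟩ := exists_reflTransGen_residual_pos hsub hu hp hneg
    exact ⟨s, e, hst, hs, hneg, by rw [abs_of_neg hneg]; linarith⟩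
  · obtain ⟨t, hst, ht⟩ := exists_reflTransGen_residual_neg hsub hu hp hpos
    exact ⟨e, t, hst, hpos, ht, by rw [abs_of_pos hpos]; linarith⟩

/-- The exchange along the path `γ 0 → γ 1 → ⋯ → γ m`, the `k`-th step taken in block `β k`. -/
def pathDirection (γ : ℕ → Fin n) (β : ℕ → Fin r) (m : ℕ) : Vec n r :=
  WithLp.toLp 2 fun i => ∑ k ∈ range m with β k = i,
    (EuclideanSpace.single (γ (k + 1)) (1 : ℝ) - EuclideanSpace.single (γ k) 1)

lemma sum_pathDirection (γ : ℕ → Fin n) (β : ℕ → Fin r) (m : ℕ) :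
    ∑ i, pathDirection γ β m i =
      EuclideanSpace.single (γ m) (1 : ℝ) - EuclideanSpace.single (γ 0) 1 := by
  simp only [pathDirection, PiLp.toLp_apply]
  rw [sum_fiberwise (range m) β
    fun k => EuclideanSpace.single (γ (k + 1)) (1 : ℝ) - EuclideanSpace.single (γ k) 1]
  exact sum_range_sub (fun k => EuclideanSpace.single (γ k) (1 : ℝ)) m

lemma pathDirection_apply (γ : ℕ → Fin n) (β : ℕ → Fin r) (m : ℕ) (i : Fin r) (e : Fin n) :
    pathDirection γ β m i e = ∑ k ∈ range m with β k = i,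
      ((if γ (k + 1) = e then 1 else 0) - (if γ k = e then 1 else 0) : ℝ) := by
  simp [pathDirection, Pi.single_apply, eq_comm]

lemma abs_pathDirection_apply_le_one {γ : ℕ → Fin n} (β : ℕ → Fin r) {m : ℕ}
    (hγ : Set.InjOn γ (Set.Iic m)) (i : Fin r) (e : Fin n) : |pathDirection γ β m i e| ≤ 1 := by
  set s := {k ∈ range m | β k = i}
  have hlt {k : ℕ} (hk : k ∈ s) : k < m := mem_range.1 (mem_filter.1 hk).1
  have h₁ : (#{k ∈ s | γ (k + 1) = e} : ℝ) ≤ 1 := by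
    exact_mod_cast card_filter_apply_eq_le_one (f := fun k => γ (k + 1))
      (fun k hk l hl hkl => by simpa using hγ (by simpa using hlt hk) (by simpa using hlt hl) hkl) e
  have h₂ : (#{k ∈ s | γ k = e} : ℝ) ≤ 1 := by
    exact_mod_cast card_filter_apply_eq_le_one (f := γ)
      (fun k hk l hl hkl => hγ (by simpa using (hlt hk).le) (by simpa using (hlt hl).le) hkl) e
  rw [pathDirection_apply, sum_sub_distrib, sum_boole, sum_boole, abs_sub_le_iff]
  constructor <;> linarith [(#{k ∈ s | γ (k + 1) = e}).cast_nonneg (α := ℝ),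
    (#{k ∈ s | γ k = e}).cast_nonneg (α := ℝ)]

lemma norm_pathDirection_sq_le {γ : ℕ → Fin n} (β : ℕ → Fin r) {m : ℕ}
    (hγ : Set.InjOn γ (Set.Iic m)) : ‖pathDirection γ β m‖ ^ 2 ≤ n * r := by
  have hblock (i : Fin r) : ‖pathDirection γ β m i‖ ^ 2 ≤ n := by
    simpa using norm_sq_le_of_forall_abs_apply_le (abs_pathDirection_apply_le_one β hγ i)
  rw [PiLp.norm_sq_eq_of_L2, mul_comm]
  simpa using sum_le_sum fun i (_ : i ∈ univ) => hblock i

lemma eventually_add_smul_pathDirection_mem_feas (hu : u ∈ feas n r F) {γ : ℕ → Fin n}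
    {β : ℕ → Fin r} {m : ℕ}
    (hγ : ∀ k < m, γ k ∈ tightClosure (F (β k)) (u (β k)) (γ (k + 1))) :
    ∀ᶠ τ in 𝓝[>] (0 : ℝ), u + τ • pathDirection γ β m ∈ feas n r F := by
  have hsum (i : Fin r) : ∑ e, pathDirection γ β m i e = 0 := by
    rw [sum_congr rfl fun e _ => pathDirection_apply γ β m i e, sum_comm]
    simp
  have htight (i : Fin r) (A : Finset (Fin n)) (hA : IsTight (F i) (u i) A) :
      ∑ e ∈ A, pathDirection γ β m i e ≤ 0 := by
    rw [sum_congr rfl fun e _ => pathDirection_apply γ β m i e, sum_comm]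
    refine sum_nonpos fun k hk => ?_
    obtain ⟨hkm, rfl⟩ := mem_filter.1 hk
    have hA' := mem_tightClosure.1 (hγ k (mem_range.1 hkm)) A hA
    by_cases h₁ : γ (k + 1) ∈ A <;> by_cases h₂ : γ k ∈ A <;> simp_all
  filter_upwards [eventually_all.2 fun i =>
    eventually_add_smul_mem_basePolytope (hu i) (hsum i) (htight i)] with τ hτ i
  exact hτ i

lemma exists_descent_direction (hsub : ∀ i, Submodular (F i)) (hu : u ∈ feas n r F)
    (hp : p ∈ feas n r F) (hne : ∑ i, u i ≠ ∑ i, p i) :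
    ∃ Δ : Vec n r, (∀ᶠ τ in 𝓝[>] (0 : ℝ), u + τ • Δ ∈ feas n r F) ∧
      ‖Δ‖ * ‖∑ i, u i - ∑ i, p i‖ < -(n * √r * ⟪∑ i, u i - ∑ i, p i, ∑ i, Δ i⟫) := by
  set R := ∑ i, u i - ∑ i, p i
  obtain ⟨e₀, he₀⟩ : ∃ e, R e ≠ 0 := by
    by_contra! h
    exact hne (sub_eq_zero.1 (by ext e; simpa [R] using h e))
  obtain ⟨e, -, hmax⟩ := exists_max_image univ (fun e => |R e|) ⟨e₀, mem_univ _⟩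
  have he : R e ≠ 0 := fun h => he₀ (abs_eq_zero.1 (le_antisymm
    (by simpa [h] using hmax e₀ (mem_univ _)) (abs_nonneg _)))
  obtain ⟨s, t, hst, hs, ht, hgap⟩ := exists_reflTransGen_residual_gap hsub hu hp he
  obtain ⟨m, γ, hγ0, hγm, hγ, hinj⟩ := exists_injOn_path_of_reflTransGen hst
  have hm : 0 < m := Nat.pos_of_ne_zero fun h => by
    subst h
    rw [hγ0] at hγm
    subst hγm
    linarith
  have : Nonempty (Fin r) := ⟨(hγ 0 hm).choose⟩
  choose! β hβ using hγ
  refine ⟨pathDirection γ β m, eventually_add_smul_pathDirection_mem_feas hu hβ, ?_⟩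
  have hinner : ⟪R, ∑ i, pathDirection γ β m i⟫ = -(R s - R t) := by
    simp [sum_pathDirection, inner_sub_right, EuclideanSpace.inner_single_right, hγ0, hγm]
  have hn : (0 : ℝ) < n := by exact_mod_cast Fin.pos_iff_nonempty.2 ⟨e⟩
  have hr : (0 : ℝ) < r := by exact_mod_cast Fin.pos_iff_nonempty.2 ‹_›
  have hR : ‖R‖ ^ 2 ≤ n * |R e| ^ 2 :=
    norm_sq_le_of_forall_abs_apply_le fun e' => hmax e' (mem_univ _)
  rw [hinner, mul_neg, neg_neg]
  refine lt_of_pow_lt_pow_left₀ 2 (mul_nonneg (by positivity) (by linarith)) ?_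
  calc (‖pathDirection γ β m‖ * ‖R‖) ^ 2 ≤ (n * r) * (n * |R e| ^ 2) := by
        rw [mul_pow]
        exact mul_le_mul (norm_pathDirection_sq_le β hinj) hR (by positivity) (by positivity)
    _ < (n * r) * (n * (R s - R t) ^ 2) := by gcongr
    _ = (n * √r * (R s - R t)) ^ 2 := by rw [mul_pow, mul_pow, Real.sq_sqrt hr.le]; ring

theorem exists_sum_eq_norm_sub_le (hsub : ∀ i, Submodular (F i)) {y : Vec n r}
    (hy : y ∈ feas n r F) (hp : p ∈ feas n r F) :
    ∃ q ∈ feas n r F, ∑ i, q i = ∑ i, p i ∧ ‖y - q‖ ≤ n * √r * ‖∑ i, y i - ∑ i, p i‖ := by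
  simpa using exists_map_eq_norm_sub_le_of_descent (isCompact_feas F) (blockSum n r)
    (∑ i, p i) (by positivity)
    (fun u hu hne => by simpa using exists_descent_direction hsub hu hp (by simpa using hne)) hy

end ExchangeGraph

section Optimality

variable {n r : ℕ} {F : Fin r → Finset (Fin n) → ℝ} {p q y : Vec n r}

lemma IsOptimal.norm_sum_sub_sq_le (hp : IsOptimal n r F p) (hy : y ∈ feas n r F) :
    ‖∑ i, y i - ∑ i, p i‖ ^ 2 ≤ g n r y - g n r p := by
  have hK : Convex ℝ (blockSum n r '' feas n r F) :=
    (convex_feas F).linear_image (blockSum n r).toLinearMap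
  have hmin : ∀ a ∈ blockSum n r '' feas n r F, ‖0 - blockSum n r p‖ ≤ ‖0 - a‖ := by
    rintro _ ⟨z, hz, rfl⟩
    simpa [g, pow_le_pow_iff_left₀] using hp.2 z hz
  have := norm_sub_sq_add_norm_sub_sq_le hK ⟨p, hp.1, rfl⟩ ⟨y, hy, rfl⟩ hmin
  simp only [blockSum_apply, zero_sub, norm_neg] at this
  rw [norm_sub_rev]
  unfold g
  linarith

lemma IsOptimal.of_sum_eq (hp : IsOptimal n r F p) (hq : q ∈ feas n r F)
    (h : ∑ i, q i = ∑ i, p i) : IsOptimal n r F q :=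
  ⟨hq, fun z hz => by simpa [g, h] using hp.2 z hz⟩

lemma isClosed_setOf_isOptimal : IsClosed {y | IsOptimal n r F y} := by
  have hg : Continuous (g n r) := by unfold g; fun_prop
  have : {y | IsOptimal n r F y} = feas n r F ∩ ⋂ z ∈ feas n r F, {y | g n r y ≤ g n r z} := by
    ext
    simp [IsOptimal]
  rw [this]
  exact (isCompact_feas F).isClosed.inter
    (isClosed_biInter fun z _ => isClosed_le hg continuous_const)

lemma IsOptimal.infDist_le (hsub : ∀ i, Submodular (F i)) (hp : IsOptimal n r F p)
    (hy : y ∈ feas n r F) :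
    Metric.infDist y {x | IsOptimal n r F x} ≤ n * √r * ‖∑ i, y i - ∑ i, p i‖ := by
  obtain ⟨q, hq, hqp, hdist⟩ := exists_sum_eq_norm_sub_le hsub hy hp.1
  have hqE : q ∈ {x | IsOptimal n r F x} := hp.of_sum_eq hq hqp
  exact (Metric.infDist_le_dist_of_mem hqE).trans (by rwa [dist_eq_norm])

end Optimality

section BlockUpdate

variable {n r : ℕ} {F : Fin r → Finset (Fin n) → ℝ} {p y z : Vec n r} {i : Fin r}

def IsBlockUpdate (n r : ℕ) (F : Fin r → Finset (Fin n) → ℝ) (y z : Vec n r) (i : Fin r) :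
    Prop :=
  (∀ j, j ≠ i → z j = y j) ∧ z i ∈ basePolytope n (F i) ∧
    ∀ w ∈ basePolytope n (F i),
      ⟪gradBlock n r y, z i - y i⟫ + ‖z i - y i‖ ^ 2 ≤ ⟪gradBlock n r y, w - y i⟫ + ‖w - y i‖ ^ 2

lemma IsBlockUpdate.mem_feas (h : IsBlockUpdate n r F y z i) (hy : y ∈ feas n r F) :
    z ∈ feas n r F := fun j => by
  by_cases hj : j = i
  · exact hj ▸ h.2.1
  · exact h.1 j hj ▸ hy j

lemma sum_sub_sum_of_eq_of_ne {ι M : Type*} [Fintype ι] [DecidableEq ι] [AddCommGroup M]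
    {f f' : ι → M} {i : ι} (h : ∀ j, j ≠ i → f j = f' j) :
    ∑ j, f j - ∑ j, f' j = f i - f' i := by
  rw [← add_sum_erase _ _ (mem_univ i), ← add_sum_erase _ _ (mem_univ i),
    sum_congr rfl fun j hj => h j (ne_of_mem_erase hj)]
  abel

lemma IsBlockUpdate.norm_sub_le (h : IsBlockUpdate n r F y z i) :
    ∀ w ∈ basePolytope n (F i), ‖y i - ∑ j, y j - z i‖ ≤ ‖y i - ∑ j, y j - w‖ := by
  intro w hw
  have hsq (v : EuclideanSpace ℝ (Fin n)) : ‖y i - ∑ j, y j - v‖ ^ 2 =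
      ⟪gradBlock n r y, v - y i⟫ + ‖v - y i‖ ^ 2 + ‖∑ j, y j‖ ^ 2 := by
    rw [show y i - ∑ j, y j - v = -((v - y i) + ∑ j, y j) by abel, norm_neg, norm_add_sq_real,
      gradBlock, real_inner_smul_left, real_inner_comm]
    ring
  have := h.2.2 w hw
  exact (pow_le_pow_iff_left₀ (norm_nonneg _) (norm_nonneg _) two_ne_zero).1
    (by rw [hsq, hsq]; linarith)

lemma IsBlockUpdate.infDist_sq_add_g_le (h : IsBlockUpdate n r F y z i) {E : Set (Vec n r)}
    (hpE : p ∈ E) (hpi : p i ∈ basePolytope n (F i)) :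
    Metric.infDist z E ^ 2 + g n r z ≤ ‖y - p‖ ^ 2 + g n r y + 2 * ⟪∑ j, y j, p i - y i⟫ := by
  classical
  set a := ∑ j, y j
  have hproj := norm_sub_sq_add_norm_sub_sq_le (convex_basePolytope _) h.2.1 hpi h.norm_sub_le
  have hdist : Metric.infDist z E ^ 2 ≤ ‖z - p‖ ^ 2 :=
    pow_le_pow_left₀ Metric.infDist_nonneg
      ((Metric.infDist_le_dist_of_mem hpE).trans_eq (dist_eq_norm _ _)) 2
  have hnorm : ‖z - p‖ ^ 2 - ‖y - p‖ ^ 2 = ‖z i - p i‖ ^ 2 - ‖y i - p i‖ ^ 2 := by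
    rw [PiLp.norm_sq_eq_of_L2, PiLp.norm_sq_eq_of_L2]
    exact sum_sub_sum_of_eq_of_ne fun j hj => by simp [h.1 j hj]
  have hg : g n r z = ‖a + (z i - y i)‖ ^ 2 := by
    rw [g, ← sub_add_cancel (∑ j, z j) a, sum_sub_sum_of_eq_of_ne fun j hj => h.1 j hj, add_comm]
  rw [show y i - a - z i = -(a + (z i - y i)) by abel,
    show y i - a - p i = -(a + (p i - y i)) by abel, norm_neg, norm_neg,
    show z i - p i = (z i - y i) - (p i - y i) by abel] at hproj
  rw [show z i - p i = (z i - y i) - (p i - y i) by abel, norm_sub_rev (y i)] at hnorm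
  rw [hg, show g n r y = ‖a‖ ^ 2 from rfl]
  linarith [norm_add_sq_real a (p i - y i)]

end BlockUpdate

lemma inv_mul_le_one_sub_mul {n r D G M S : ℝ} (hn : 1 ≤ n) (hr : 1 ≤ r) (hMG : M ≤ G)
    (hDM : D ≤ n ^ 2 * r * M) (hS : S ≤ r * (D + G) - (G + M)) :
    r⁻¹ * S ≤ (1 - 2 / (n ^ 2 * r ^ 2 + r)) * (D + G) := by
  have hQ : 0 < n ^ 2 * r ^ 2 + r := by positivity
  rw [inv_mul_le_iff₀ (by positivity), one_sub_div hQ.ne', div_mul_eq_mul_div, mul_div_assoc',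
    le_div_iff₀ hQ]
  have hn2 : 1 ≤ n ^ 2 * r := one_le_mul_of_one_le_of_one_le (one_le_pow₀ hn) hr
  nlinarith [mul_le_mul_of_nonneg_left hS hQ.le,
    mul_le_mul_of_nonneg_left hDM (by positivity : 0 ≤ 2 * r),
    mul_nonneg (mul_nonneg (by positivity : 0 ≤ r) (sub_nonneg.2 hn2)) (sub_nonneg.2 hMG)]

section Convergence

variable {n r : ℕ}

theorem inv_mul_sum_potential_le {F : Fin r → Finset (Fin n) → ℝ} (hn : 1 ≤ n) (hr : 1 ≤ r)
    (hsub : ∀ i, Submodular (F i)) {gstar : ℝ} (hgstar : IsLeast (g n r '' feas n r F) gstar)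
    {y : Vec n r} (hy : y ∈ feas n r F) {z : Fin r → Vec n r}
    (hz : ∀ i, IsBlockUpdate n r F y (z i) i) :
    (r : ℝ)⁻¹ * ∑ i, (Metric.infDist (z i) {x | IsOptimal n r F x} ^ 2 + g n r (z i) - gstar)
      ≤ (1 - 2 / ((n : ℝ) ^ 2 * (r : ℝ) ^ 2 + r))
        * (Metric.infDist y {x | IsOptimal n r F x} ^ 2 + g n r y - gstar) := by
  obtain ⟨p₀, hp₀, rfl⟩ := hgstar.1
  have hp₀opt : IsOptimal n r F p₀ := ⟨hp₀, fun z hz => hgstar.2 ⟨z, hz, rfl⟩⟩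
  obtain ⟨p, hpE, hyp⟩ := isClosed_setOf_isOptimal.exists_infDist_eq_dist ⟨p₀, hp₀opt⟩ y
  have hp : IsOptimal n r F p := hpE
  have hgp : g n r p = g n r p₀ := le_antisymm (hp.2 p₀ hp₀) (hp₀opt.2 p hp.1)
  rw [hyp, dist_eq_norm, ← hgp, add_sub_assoc (‖y - p‖ ^ 2)]
  have hD : ‖y - p‖ ^ 2 ≤ n ^ 2 * r * ‖∑ i, y i - ∑ i, p i‖ ^ 2 := by
    have hdist : ‖y - p‖ ≤ n * √r * ‖∑ i, y i - ∑ i, p i‖ := by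
      rw [← dist_eq_norm, ← hyp]
      exact hp.infDist_le hsub hy
    have := pow_le_pow_left₀ (norm_nonneg _) hdist 2
    rwa [mul_pow, mul_pow, Real.sq_sqrt (Nat.cast_nonneg r)] at this
  have hcross : ∑ i, 2 * ⟪∑ j, y j, p i - y i⟫
      = g n r p - g n r y - ‖∑ i, y i - ∑ i, p i‖ ^ 2 := by
    rw [← mul_sum, ← inner_sum, sum_sub_distrib, g, g,
      show ∑ i, p i = ∑ j, y j + (∑ i, p i - ∑ j, y j) by abel, norm_add_sq_real,
      norm_sub_rev (∑ i, y i)]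
    simp only [add_sub_cancel_left]
    ring
  refine inv_mul_le_one_sub_mul (by exact_mod_cast hn) (by exact_mod_cast hr)
    (hp.norm_sum_sub_sq_le hy) hD ?_
  calc _ ≤ ∑ i, (‖y - p‖ ^ 2 + g n r y - g n r p + 2 * ⟪∑ j, y j, p i - y i⟫) :=
        sum_le_sum fun i _ => by linarith [(hz i).infDist_sq_add_g_le hpE (hp.1 i)]
    _ = _ := by
      rw [sum_add_distrib, hcross]
      simp
      ring

lemma rcdmIter_mem {T : Vec n r → Fin r → Vec n r} {S : Set (Vec n r)}
    (hS : ∀ y ∈ S, ∀ i, T y i ∈ S) {y0 : Vec n r} (hy0 : y0 ∈ S) :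
    ∀ k s, rcdmIter n r T y0 k s ∈ S
  | 0, _ => hy0
  | k + 1, _ => hS _ (rcdmIter_mem hS hy0 k _) _

lemma sum_rcdmIter_succ (T : Vec n r → Fin r → Vec n r) (y0 : Vec n r) (f : Vec n r → ℝ)
    (k : ℕ) :
    ∑ s : Fin (k + 1) → Fin r, f (rcdmIter n r T y0 (k + 1) s)
      = ∑ t : Fin k → Fin r, ∑ i, f (T (rcdmIter n r T y0 k t) i) := by
  rw [← (Fin.snocEquiv fun _ => Fin r).sum_comp, Fintype.sum_prod_type, sum_comm]
  simp [rcdmIter]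

theorem sum_inv_pow_mul_rcdmIter_le {T : Vec n r → Fin r → Vec n r} {S : Set (Vec n r)}
    {V : Vec n r → ℝ} {ρ : ℝ} (hρ : 0 ≤ ρ) (hS : ∀ y ∈ S, ∀ i, T y i ∈ S)
    (hstep : ∀ y ∈ S, (r : ℝ)⁻¹ * ∑ i, V (T y i) ≤ ρ * V y) {y0 : Vec n r} (hy0 : y0 ∈ S)
    (k : ℕ) :
    ∑ s : Fin k → Fin r, ((r : ℝ) ^ k)⁻¹ * V (rcdmIter n r T y0 k s) ≤ ρ ^ k * V y0 := by
  induction k with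
  | zero => simp [rcdmIter]
  | succ k ih =>
    calc ∑ s : Fin (k + 1) → Fin r, ((r : ℝ) ^ (k + 1))⁻¹ * V (rcdmIter n r T y0 (k + 1) s)
        = ∑ t : Fin k → Fin r, ((r : ℝ) ^ k)⁻¹ *
            ((r : ℝ)⁻¹ * ∑ i, V (T (rcdmIter n r T y0 k t) i)) := by
          rw [← mul_sum, sum_rcdmIter_succ, pow_succ, mul_inv, mul_sum]
          simp only [mul_assoc]
      _ ≤ ∑ t : Fin k → Fin r, ((r : ℝ) ^ k)⁻¹ * (ρ * V (rcdmIter n r T y0 k t)) := by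
          exact sum_le_sum fun t _ => mul_le_mul_of_nonneg_left
            (hstep _ (rcdmIter_mem hS hy0 k t)) (by positivity)
      _ = ρ * ∑ t : Fin k → Fin r, ((r : ℝ) ^ k)⁻¹ * V (rcdmIter n r T y0 k t) := by
          rw [mul_sum]
          exact sum_congr rfl fun _ _ => by ring
      _ ≤ ρ ^ (k + 1) * V y0 := by
          rw [pow_succ, mul_comm (ρ ^ k) ρ, mul_assoc]
          exact mul_le_mul_of_nonneg_left ih hρ

end Convergence

theorem statement3_general (n r : ℕ) (hn : 1 ≤ n) (hr : 1 ≤ r)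
    (F : Fin r → Finset (Fin n) → ℝ)
    (hsub : ∀ i, Submodular (F i))
    (T : Vec n r → Fin r → Vec n r)
    (hT : ∀ (y : Vec n r) (i : Fin r),
      (∀ j, j ≠ i → T y i j = y j) ∧
      T y i i ∈ basePolytope n (F i) ∧
      (∀ z ∈ basePolytope n (F i),
        ⟪gradBlock n r y, T y i i - y i⟫ + ‖T y i i - y i‖ ^ 2
          ≤ ⟪gradBlock n r y, z - y i⟫ + ‖z - y i‖ ^ 2))
    (y0 : Vec n r) (hy0 : y0 ∈ feas n r F)
    (E : Set (Vec n r)) (hE : E = {y : Vec n r | IsOptimal n r F y})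
    (gstar : ℝ) (hgstar : IsLeast (g n r '' feas n r F) gstar) :
    ∀ k : ℕ,
      ∑ s : Fin (k + 1) → Fin r, ((r : ℝ) ^ (k + 1))⁻¹ *
          (Metric.infDist (rcdmIter n r T y0 (k + 1) s) E ^ 2
            + g n r (rcdmIter n r T y0 (k + 1) s) - gstar)
        ≤ (1 - 2 / ((n : ℝ) ^ 2 * (r : ℝ) ^ 2 + r)) ^ (k + 1)
            * (Metric.infDist y0 E ^ 2 + g n r y0 - gstar) := by
  subst hE
  have hρ : 0 ≤ 1 - 2 / ((n : ℝ) ^ 2 * (r : ℝ) ^ 2 + r) := by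
    have hn' : (1 : ℝ) ≤ n := by exact_mod_cast hn
    have hr' : (1 : ℝ) ≤ r := by exact_mod_cast hr
    rw [sub_nonneg, div_le_one (by positivity)]
    nlinarith [one_le_mul_of_one_le_of_one_le (one_le_pow₀ hn' (n := 2)) (one_le_pow₀ hr' (n := 2))]
  exact fun k => sum_inv_pow_mul_rcdmIter_le
    (V := fun y => Metric.infDist y {x | IsOptimal n r F x} ^ 2 + g n r y - gstar) hρ
    (fun y hy i => IsBlockUpdate.mem_feas (hT y i) hy)
    (fun y hy => inv_mul_sum_potential_le hn hr hsub hgstar hy fun i => hT y i) hy0 (k + 1)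

/-- Linear convergence of the random coordinate descent method for
(Prox-DSM): the average over all index sequences `(i₀,…,i_k) ∈ {1,…,r}^{k+1}` (each with
weight `r^{-(k+1)}`) of `d(y_{k+1}, E)² + g(y_{k+1}) - g*` is at most
`(1 - 2/(n²r² + r))^{k+1} (d(y₀, E)² + g(y₀) - g*)`. -/
theorem statement3 (n r : ℕ) (hn : 1 ≤ n) (hr : 1 ≤ r)
    (F : Fin r → Finset (Fin n) → ℝ)
    (hsub : ∀ i, Submodular (F i)) (hnorm : ∀ i, F i ∅ = 0)
    (T : Vec n r → Fin r → Vec n r)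
    (hT : ∀ (y : Vec n r) (i : Fin r),
      (∀ j, j ≠ i → T y i j = y j) ∧
      T y i i ∈ basePolytope n (F i) ∧
      (∀ z ∈ basePolytope n (F i),
        ⟪gradBlock n r y, T y i i - y i⟫ + ‖T y i i - y i‖ ^ 2
          ≤ ⟪gradBlock n r y, z - y i⟫ + ‖z - y i‖ ^ 2))
    (y0 : Vec n r) (hy0 : y0 ∈ feas n r F)
    (E : Set (Vec n r)) (hE : E = {y : Vec n r | IsOptimal n r F y})
    (gstar : ℝ) (hgstar : IsLeast (g n r '' feas n r F) gstar) :
    ∀ k : ℕ,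
      ∑ s : Fin (k + 1) → Fin r, ((r : ℝ) ^ (k + 1))⁻¹ *
          (Metric.infDist (rcdmIter n r T y0 (k + 1) s) E ^ 2
            + g n r (rcdmIter n r T y0 (k + 1) s) - gstar)
        ≤ (1 - 2 / ((n : ℝ) ^ 2 * (r : ℝ) ^ 2 + r)) ^ (k + 1)
            * (Metric.infDist y0 E ^ 2 + g n r y0 - gstar) :=
  statement3_general n r hn hr F hsub T hT y0 hy0 E hE gstar hgstar
end
end

section
/- Let y ∈ 𝒴, let y* be an optimal solution of (Prox-DSM) closest to y, and let g* be the optimal value of (Prox-DSM). Then ⟨∇g(y), y* − y⟩ ≤ ( g* − g(y) ) − (1/(n²r)) ‖y − y*‖². -/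
open scoped RealInnerProductSpace Pointwise

noncomputable section

/-!
Write `s = ∑ᵢ y⁽ⁱ⁾` and `p = ∑ᵢ y*⁽ⁱ⁾`. Since `g` is quadratic,
`⟨∇g(y), y* - y⟩ = g(y*) - g(y) - ‖p - s‖²`, so it suffices to show `‖y - y*‖² ≤ n²r ‖p - s‖²`.
For this we build `z ∈ 𝒴` with `∑ᵢ z⁽ⁱ⁾ = p`, hence optimal, so that `‖y - y*‖ ≤ ‖y - z‖`, and with
every coordinate of `z - y` bounded by the surplus `∑ᵤ (s - p)ᵤ⁺ ≤ ‖s - p‖₁ ≤ √n ‖s - p‖`.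

The construction is an augmenting-path argument. If the block sum of `w ∈ 𝒴` exceeds `p` at `u`,
uncrossing tight sets (submodularity) yields a path of exchange arcs from `u` to an element where
it falls below `p`: otherwise the complement of the set reachable from `u` would be tight in every
block and could not hold less mass than `p` puts there. Pushing a small mass `ε` along a simple such
path keeps `w` in `𝒴`, lowers the surplus by `ε` and moves each coordinate by at most `ε`. Hence a
minimiser of the surplus over the compact set of `w ∈ 𝒴` whose distance to `y` in every coordinate
is at most the decrease of the surplus has surplus zero.
-/

theorem List.exists_nodup_isChain_cons_of_reflTransGen {α : Type*} {R : α → α → Prop}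
    {a b : α} (h : Relation.ReflTransGen R a b) :
    ∃ l, (a :: l).IsChain R ∧ (a :: l).Nodup ∧ (a :: l).getLast (cons_ne_nil a l) = b := by
  induction h using Relation.ReflTransGen.head_induction_on with
  | refl => exact ⟨[], .singleton _, nodup_singleton _, rfl⟩
  | @head a c hac _ ih =>
    obtain ⟨l, hchain, hnodup, hlast⟩ := ih
    by_cases ha : a ∈ c :: l
    · obtain ⟨p, q, hpq⟩ := append_of_mem ha
      have hsuffix : a :: q <:+ c :: l := ⟨p, hpq.symm⟩
      refine ⟨q, hchain.suffix hsuffix, hnodup.sublist hsuffix.sublist, ?_⟩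
      rw [← hlast]
      simp only [hpq, getLast_append_of_ne_nil _ (cons_ne_nil a q)]
    · exact ⟨c :: l, isChain_cons_cons.2 ⟨hac, hchain⟩, nodup_cons.2 ⟨ha, hnodup⟩,
        by rw [getLast_cons (cons_ne_nil c l), hlast]⟩

theorem exists_pos_le_of_pos {α : Type*} [Finite α] (f : α → ℝ) :
    ∃ γ > 0, ∀ a, 0 < f a → γ ≤ f a := by
  classical
  have := Fintype.ofFinite α
  rcases em (∃ a, 0 < f a) with ⟨a, ha⟩ | h
  · obtain ⟨a₀, ha₀, hmin⟩ :=
      (Finset.univ.filter (0 < f ·)).exists_min_image f ⟨a, by simpa using ha⟩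
    exact ⟨f a₀, (Finset.mem_filter.1 ha₀).2, fun a ha => hmin a (by simpa using ha)⟩
  · exact ⟨1, one_pos, fun a ha => absurd ⟨a, ha⟩ h⟩

namespace ProxDSM

open Finset

variable {n : ℕ}

section TightSets

variable {F : Finset (Fin n) → ℝ} {w : EuclideanSpace ℝ (Fin n)}

def IsTight (F : Finset (Fin n) → ℝ) (w : EuclideanSpace ℝ (Fin n)) (A : Finset (Fin n)) : Prop :=
  ∑ u ∈ A, w u = F A

theorem isTight_inter_and_union (hF : Submodular F) (hw : w ∈ basePolytope n F)
    {A B : Finset (Fin n)} (hA : IsTight F w A) (hB : IsTight F w B) :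
    IsTight F w (A ∩ B) ∧ IsTight F w (A ∪ B) := by
  have hmod : ∑ u ∈ A ∪ B, w u + ∑ u ∈ A ∩ B, w u = ∑ u ∈ A, w u + ∑ u ∈ B, w u :=
    sum_union_inter
  have := hw.1 (A ∩ B); have := hw.1 (A ∪ B); have := hF A B
  unfold IsTight at *
  constructor <;> linarith

/-- Moving a little mass from `u` to `v` keeps `w` in the polymatroid of `F`. -/
def Exchangeable (F : Finset (Fin n) → ℝ) (w : EuclideanSpace ℝ (Fin n)) (u v : Fin n) : Prop :=
  ∀ A, v ∈ A → u ∉ A → ∑ a ∈ A, w a < F A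

theorem isTight_compl_of_forall_not_exchangeable (hF : Submodular F) (hF0 : F ∅ = 0)
    (hw : w ∈ basePolytope n F) (R : Finset (Fin n))
    (hR : ∀ u ∈ R, ∀ v ∉ R, ¬ Exchangeable F w u v) : IsTight F w Rᶜ := by
  have hsep : ∀ v u, ∃ A, v ∉ R → u ∈ R → v ∈ A ∧ u ∉ A ∧ IsTight F w A := by
    intro v u
    by_cases hvu : v ∉ R ∧ u ∈ R
    · have hnot := hR u hvu.2 v hvu.1
      simp only [Exchangeable, not_forall, not_lt] at hnot
      obtain ⟨A, hvA, huA, hA⟩ := hnot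
      exact ⟨A, fun _ _ => ⟨hvA, huA, le_antisymm (hw.1 A) hA⟩⟩
    · exact ⟨∅, fun hv hu => absurd ⟨hv, hu⟩ hvu⟩
  choose T hT using hsep
  have hcompl : Rᶜ = Rᶜ.sup fun v => R.inf (T v) := by
    ext x
    simp only [mem_sup, mem_inf, mem_compl]
    constructor
    · exact fun hx => ⟨x, hx, fun u hu => (hT x u hx hu).1⟩
    · rintro ⟨v, hv, hxv⟩ hx
      exact (hT v x hv hx).2.1 (hxv x hx)
  rw [hcompl]
  refine sup_induction (p := IsTight F w) (by simp [IsTight, hF0])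
    (fun A hA B hB => (isTight_inter_and_union hF hw hA hB).2) fun v hv => ?_
  refine inf_induction (p := IsTight F w) (by simpa [IsTight] using hw.2)
    (fun A hA B hB => (isTight_inter_and_union hF hw hA hB).1) fun u hu => ?_
  exact (hT v u (mem_compl.1 hv) hu).2.2

theorem sum_le_sum_of_isTight_compl {x : EuclideanSpace ℝ (Fin n)} (hw : w ∈ basePolytope n F)
    (hx : x ∈ basePolytope n F) {R : Finset (Fin n)}
    (hR : IsTight F w Rᶜ) : ∑ u ∈ R, w u ≤ ∑ u ∈ R, x u := by
  have hwsplit := sum_add_sum_compl R fun u => w u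
  have hxsplit := sum_add_sum_compl R fun u => x u
  have := hx.1 Rᶜ
  rw [IsTight] at hR
  linarith [hw.2, hx.2]

end TightSets

def surplus (a b : EuclideanSpace ℝ (Fin n)) : ℝ := ∑ u, max (b u - a u) 0

theorem surplus_nonneg (a b : EuclideanSpace ℝ (Fin n)) : 0 ≤ surplus a b :=
  sum_nonneg fun _ _ => le_max_right _ _

theorem continuous_surplus (a : EuclideanSpace ℝ (Fin n)) : Continuous (surplus a) := by
  unfold surplus
  fun_prop

theorem exists_lt_of_surplus_pos {a b : EuclideanSpace ℝ (Fin n)} (h : 0 < surplus a b) :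
    ∃ u, a u < b u := by
  by_contra! hle
  exact h.ne' (sum_eq_zero fun u _ => max_eq_right (sub_nonpos.2 (hle u)))

theorem eq_of_surplus_eq_zero {a b : EuclideanSpace ℝ (Fin n)} (h : surplus a b = 0)
    (hsum : ∑ u, a u = ∑ u, b u) : b = a := by
  have hle : ∀ u, b u ≤ a u := fun u => by
    have := (sum_eq_zero_iff_of_nonneg fun _ _ => le_max_right _ _).1 h u (mem_univ u)
    simpa using this
  ext u
  exact (sum_eq_sum_iff_of_le fun u _ => hle u).1 hsum.symm u (mem_univ u)

theorem surplus_add_smul_single_sub_single {a b : EuclideanSpace ℝ (Fin n)} {u₀ v : Fin n}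
    {ε : ℝ} (hε : 0 ≤ ε) (hu₀ : ε ≤ b u₀ - a u₀) (hv : ε ≤ a v - b v) (hne : u₀ ≠ v) :
    surplus a (b + ε • (EuclideanSpace.single v 1 - EuclideanSpace.single u₀ 1)) =
      surplus a b - ε := by
  set b' : EuclideanSpace ℝ (Fin n) :=
    b + ε • (EuclideanSpace.single v 1 - EuclideanSpace.single u₀ 1)
  have hb' : ∀ u, b' u = b u + ε * ((if u = v then 1 else 0) - (if u = u₀ then 1 else 0)) :=
    fun u => by simp [b']
  have hdiff : ∑ u, (max (b' u - a u) 0 - max (b u - a u) 0) = -ε := by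
    rw [sum_eq_single u₀ ?_ (by simp)]
    · rw [hb', if_neg hne, if_pos rfl, max_eq_left (by linarith), max_eq_left (by linarith)]
      ring
    · intro u _ hu
      by_cases huv : u = v
      · rw [hb', if_pos huv, if_neg hu, max_eq_right (by subst huv; linarith),
          max_eq_right (by subst huv; linarith)]
        ring
      · simp [hb', hu, huv]
  rw [surplus, surplus]
  linarith [sum_sub_distrib (s := univ) (fun u => max (b' u - a u) 0) fun u => max (b u - a u) 0]

theorem sq_surplus_le (a b : EuclideanSpace ℝ (Fin n)) : surplus a b ^ 2 ≤ n * ‖b - a‖ ^ 2 := by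
  have hl1 : surplus a b ≤ ∑ u, |b u - a u| :=
    sum_le_sum fun u _ => max_le (le_abs_self _) (abs_nonneg _)
  calc surplus a b ^ 2 ≤ (∑ u, |b u - a u|) ^ 2 := by gcongr; exact surplus_nonneg a b
    _ ≤ (univ : Finset (Fin n)).card * ∑ u, |b u - a u| ^ 2 := sq_sum_le_card_mul_sum_sq
    _ = n * ‖b - a‖ ^ 2 := by simp [EuclideanSpace.real_norm_sq_eq]

theorem isCompact_basePolytope (F : Finset (Fin n) → ℝ) : IsCompact (basePolytope n F) := by
  have hclosed : IsClosed (basePolytope n F) := by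
    have : basePolytope n F = (⋂ A, {w : EuclideanSpace ℝ (Fin n) | ∑ u ∈ A, w u ≤ F A}) ∩
        {w | ∑ u, w u = F univ} := by
      ext; simp [basePolytope]
    rw [this]
    exact (isClosed_iInter fun A => isClosed_le (by fun_prop) continuous_const).inter
      (isClosed_eq (by fun_prop) continuous_const)
  set e := (EuclideanSpace.equiv (Fin n) ℝ).toHomeomorph
  refine (e.isCompact_preimage.2 (isCompact_Icc (a := fun u => F univ - F {u}ᶜ)
    (b := fun u => F {u}))).of_isClosed_subset hclosed fun w hw => ⟨fun u => ?_, fun u => ?_⟩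
  · have hsplit := sum_add_sum_compl {u} fun a => w a
    rw [sum_singleton] at hsplit
    change F univ - F {u}ᶜ ≤ w u
    linarith [hw.2, hw.1 {u}ᶜ]
  · change w u ≤ F {u}
    simpa using hw.1 {u}

section Family

variable {ι : Type*}

def Arc (F : ι → Finset (Fin n) → ℝ) (w : ι → EuclideanSpace ℝ (Fin n)) (u v : Fin n) : Prop :=
  ∃ i, Exchangeable (F i) (w i) u v

theorem exists_block_of_arc [Nonempty ι] (F : ι → Finset (Fin n) → ℝ)
    (w : ι → EuclideanSpace ℝ (Fin n)) : ∃ blk : Fin n → Fin n → ι,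
      ∀ a b, Arc F w a b → Exchangeable (F (blk a b)) (w (blk a b)) a b := by
  classical
  exact ⟨fun a b => if h : Arc F w a b then h.choose else Classical.arbitrary ι,
    fun a b h => by simpa [dif_pos h] using h.choose_spec⟩

variable [Fintype ι]

theorem sum_apply_sum_of_mem_basePolytope {F : ι → Finset (Fin n) → ℝ}
    {w : ι → EuclideanSpace ℝ (Fin n)} (hw : ∀ i, w i ∈ basePolytope n (F i)) :
    ∑ u, (∑ i, w i) u = ∑ i, F i univ := by
  simp only [WithLp.ofLp_sum, Finset.sum_apply]
  rw [sum_comm]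
  exact sum_congr rfl fun i _ => (hw i).2

theorem exists_reflTransGen_arc_of_lt {F : ι → Finset (Fin n) → ℝ}
    (hF : ∀ i, Submodular (F i)) (hF0 : ∀ i, F i ∅ = 0) {w x : ι → EuclideanSpace ℝ (Fin n)}
    (hw : ∀ i, w i ∈ basePolytope n (F i)) (hx : ∀ i, x i ∈ basePolytope n (F i))
    {u₀ : Fin n} (hu₀ : (∑ i, x i) u₀ < (∑ i, w i) u₀) :
    ∃ v, Relation.ReflTransGen (Arc F w) u₀ v ∧ (∑ i, w i) v < (∑ i, x i) v := by
  classical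
  by_contra! hnone
  set R := univ.filter (Relation.ReflTransGen (Arc F w) u₀)
  have hclosed : ∀ i, ∀ u ∈ R, ∀ v ∉ R, ¬ Exchangeable (F i) (w i) u v := by
    intro i u hu v hv hexch
    simp only [R, mem_filter, mem_univ, true_and] at hu hv
    exact hv (hu.tail ⟨i, hexch⟩)
  have hle : ∑ u ∈ R, (∑ i, w i) u ≤ ∑ u ∈ R, (∑ i, x i) u := by
    simp only [WithLp.ofLp_sum, Finset.sum_apply]
    rw [sum_comm, sum_comm (s := R)]
    exact sum_le_sum fun i _ => sum_le_sum_of_isTight_compl (hw i) (hx i)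
      (isTight_compl_of_forall_not_exchangeable (hF i) (hF0 i) (hw i) R (hclosed i))
  have hlt : ∑ u ∈ R, (∑ i, x i) u < ∑ u ∈ R, (∑ i, w i) u :=
    sum_lt_sum (fun v hv => hnone v (by simpa [R] using hv))
      ⟨u₀, by simp [R, Relation.ReflTransGen.refl], hu₀⟩
  exact hlt.not_ge hle

end Family

section PathShift

variable {ι : Type*} [DecidableEq ι]

def arcShift (i : ι) (u v : Fin n) : ι → EuclideanSpace ℝ (Fin n) :=
  Pi.single i (EuclideanSpace.single v 1 - EuclideanSpace.single u 1)

def pathShift (blk : Fin n → Fin n → ι) : Fin n → List (Fin n) → ι → EuclideanSpace ℝ (Fin n)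
  | _, [] => 0
  | u, v :: l => arcShift (blk u v) u v + pathShift blk v l

variable (blk : Fin n → Fin n → ι)

theorem arcShift_apply (i j : ι) (u v a : Fin n) :
    arcShift j u v i a =
      if j = i then (if a = v then 1 else 0) - (if a = u then 1 else 0) else 0 := by
  by_cases hji : j = i
  · subst hji; simp [arcShift]
  · simp [arcShift, hji]

theorem sum_mem_arcShift (A : Finset (Fin n)) (i j : ι) (u v : Fin n) :
    ∑ a ∈ A, arcShift j u v i a =
      if j = i then (if v ∈ A then 1 else 0) - (if u ∈ A then 1 else 0) else 0 := by
  simp only [arcShift_apply]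
  split_ifs <;> simp [sum_sub_distrib, *]

theorem sum_pathShift [Fintype ι] (u : Fin n) (l : List (Fin n)) :
    ∑ i, pathShift blk u l i =
      EuclideanSpace.single ((u :: l).getLast (List.cons_ne_nil u l)) 1 -
        EuclideanSpace.single u 1 := by
  induction l generalizing u with
  | nil => simp [pathShift]
  | cons v l ih =>
    simp only [pathShift, Pi.add_apply]
    rw [sum_add_distrib, ih, List.getLast_cons (List.cons_ne_nil v l)]
    simp [arcShift, Finset.sum_pi_single']

theorem sum_univ_pathShift (u : Fin n) (l : List (Fin n)) (i : ι) :
    ∑ a, pathShift blk u l i a = 0 := by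
  induction l generalizing u with
  | nil => simp [pathShift]
  | cons v l ih =>
    simp only [pathShift, Pi.add_apply, WithLp.ofLp_add, sum_add_distrib, ih,
      sum_mem_arcShift]
    simp

theorem sum_mem_pathShift_le_length (A : Finset (Fin n)) (u : Fin n) (l : List (Fin n)) (i : ι) :
    ∑ a ∈ A, pathShift blk u l i a ≤ l.length := by
  induction l generalizing u with
  | nil => simp [pathShift]
  | cons v l ih =>
    simp only [pathShift, Pi.add_apply, WithLp.ofLp_add, sum_add_distrib,
      sum_mem_arcShift, List.length_cons, Nat.cast_succ]
    have := ih v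
    split_ifs <;> linarith

theorem sum_mem_pathShift_nonpos {F : ι → Finset (Fin n) → ℝ} {w : ι → EuclideanSpace ℝ (Fin n)}
    {A : Finset (Fin n)} {i : ι} (hA : IsTight (F i) (w i) A) (u : Fin n) (l : List (Fin n))
    (hchain : (u :: l).IsChain fun a b => Exchangeable (F (blk a b)) (w (blk a b)) a b) :
    ∑ a ∈ A, pathShift blk u l i a ≤ 0 := by
  induction l generalizing u with
  | nil => simp [pathShift]
  | cons v l ih =>
    obtain ⟨hexch, hchain⟩ := List.isChain_cons_cons.1 hchain
    simp only [pathShift, Pi.add_apply, WithLp.ofLp_add, sum_add_distrib,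
      sum_mem_arcShift]
    have := ih v hchain
    split_ifs with hi hv hu hu <;> try linarith
    subst hi
    exact absurd hA (hexch A hv hu).ne

theorem pathShift_apply_eq_zero {u a : Fin n} {l : List (Fin n)} (ha : a ∉ u :: l) (i : ι) :
    pathShift blk u l i a = 0 := by
  induction l generalizing u with
  | nil => simp [pathShift]
  | cons v l ih =>
    simp only [List.mem_cons, not_or] at ha
    simp [pathShift, arcShift_apply, ha.1, ha.2.1, ih (u := v) (by simp [ha.2.1, ha.2.2])]

theorem abs_pathShift_le_one {u : Fin n} {l : List (Fin n)} (hnodup : (u :: l).Nodup) (i : ι)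
    (a : Fin n) : |pathShift blk u l i a| ≤ 1 := by
  -- Without repeated nodes, each node gains `1` through its in-arc and loses `1` through its
  -- out-arc, possibly in the same block.
  suffices h : ∀ u l, (u :: l).Nodup →
      (pathShift blk u l i u ≤ 0 ∧ -1 ≤ pathShift blk u l i u) ∧
        ∀ a, |pathShift blk u l i a| ≤ 1 from
    (h u l hnodup).2 a
  intro u l hnodup
  induction l generalizing u with
  | nil => simp [pathShift]
  | cons v l ih =>
    obtain ⟨hu, hnodup⟩ := List.nodup_cons.1 hnodup
    have hvu : v ≠ u := fun h => hu (h ▸ List.mem_cons_self)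
    have hrest := pathShift_apply_eq_zero blk hu i
    obtain ⟨⟨hv0, hv1⟩, hbound⟩ := ih v hnodup
    have hsplit : ∀ a, pathShift blk u (v :: l) i a =
        arcShift (blk u v) u v i a + pathShift blk v l i a := fun a => rfl
    have hhead : pathShift blk u (v :: l) i u ≤ 0 ∧ -1 ≤ pathShift blk u (v :: l) i u := by
      rw [hsplit, hrest, arcShift_apply]
      split_ifs <;> simp_all
    refine ⟨hhead, fun a => abs_le.2 ?_⟩
    by_cases hau : a = u
    · subst hau; constructor <;> linarith
    rw [hsplit, arcShift_apply]
    by_cases hav : a = v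
    · subst hav
      simp only [if_neg hvu, sub_zero]
      split_ifs <;> constructor <;> linarith
    · simpa [hau, hav] using abs_le.1 (hbound a)

theorem add_smul_pathShift_mem_basePolytope {F : ι → Finset (Fin n) → ℝ}
    {w : ι → EuclideanSpace ℝ (Fin n)} (hw : ∀ i, w i ∈ basePolytope n (F i))
    {u : Fin n} {l : List (Fin n)}
    (hchain : (u :: l).IsChain fun a b => Exchangeable (F (blk a b)) (w (blk a b)) a b)
    {ε : ℝ} (hε : 0 ≤ ε)
    (hslack : ∀ i A, ¬ IsTight (F i) (w i) A → ∑ a ∈ A, w i a + ε * l.length ≤ F i A) (i : ι) :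
    w i + ε • pathShift blk u l i ∈ basePolytope n (F i) := by
  have hsum : ∀ A : Finset (Fin n), ∑ a ∈ A, (w i + ε • pathShift blk u l i) a =
      ∑ a ∈ A, w i a + ε * ∑ a ∈ A, pathShift blk u l i a := fun A => by
    simp [sum_add_distrib, mul_sum]
  refine ⟨fun A => ?_, ?_⟩
  · rw [hsum]
    by_cases hA : IsTight (F i) (w i) A
    · nlinarith [sum_mem_pathShift_nonpos blk hA u l hchain, (hw i).1 A]
    · nlinarith [sum_mem_pathShift_le_length blk A u l i, hslack i A hA]
  · rw [hsum, sum_univ_pathShift, mul_zero, add_zero, (hw i).2]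

end PathShift

section Augmentation

variable {ι : Type*} [Fintype ι] {F : ι → Finset (Fin n) → ℝ}

theorem exists_mem_basePolytope_surplus_lt (hF : ∀ i, Submodular (F i)) (hF0 : ∀ i, F i ∅ = 0)
    {x w : ι → EuclideanSpace ℝ (Fin n)}
    (hx : ∀ i, x i ∈ basePolytope n (F i)) (hw : ∀ i, w i ∈ basePolytope n (F i))
    (hpos : 0 < surplus (∑ i, x i) (∑ i, w i)) :
    ∃ w' : ι → EuclideanSpace ℝ (Fin n), (∀ i, w' i ∈ basePolytope n (F i)) ∧
      surplus (∑ i, x i) (∑ i, w' i) < surplus (∑ i, x i) (∑ i, w i) ∧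
      ∀ i u, |w' i u - w i u| ≤
        surplus (∑ i, x i) (∑ i, w i) - surplus (∑ i, x i) (∑ i, w' i) := by
  classical
  obtain ⟨u₀, hu₀⟩ := exists_lt_of_surplus_pos hpos
  obtain ⟨v, hreach, hv⟩ := exists_reflTransGen_arc_of_lt hF hF0 hw hx hu₀
  obtain ⟨l, hchain, hnodup, hlast⟩ := List.exists_nodup_isChain_cons_of_reflTransGen hreach
  have : Nonempty ι := by
    by_contra hι
    simp [not_nonempty_iff.1 hι] at hu₀
  obtain ⟨blk, hblk⟩ := exists_block_of_arc F w
  obtain ⟨γ, hγ, hγle⟩ :=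
    exists_pos_le_of_pos fun p : ι × Finset (Fin n) => F p.1 p.2 - ∑ a ∈ p.2, w p.1 a
  -- Every non-tight set has slack `≥ γ ≥ ε |l|`, and tight sets cannot grow along exchange arcs.
  set ε := min (min ((∑ i, w i) u₀ - (∑ i, x i) u₀) ((∑ i, x i) v - (∑ i, w i) v))
    (γ / (l.length + 1))
  have hε : 0 < ε := lt_min (lt_min (sub_pos.2 hu₀) (sub_pos.2 hv)) (by positivity)
  have hεγ : ε * l.length ≤ γ :=
    calc ε * l.length ≤ γ / (l.length + 1) * l.length := by gcongr; exact min_le_right _ _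
      _ ≤ γ := by
        rw [div_mul_eq_mul_div, div_le_iff₀ (by positivity)]
        nlinarith
  set w' := fun i => w i + ε • pathShift blk u₀ l i
  have hw' : ∀ i, w' i ∈ basePolytope n (F i) :=
    add_smul_pathShift_mem_basePolytope blk hw (hchain.imp fun a b hab => hblk a b hab) hε.le
      fun i A hA => by
        have := hγle (i, A) (sub_pos.2 (lt_of_le_of_ne ((hw i).1 A) hA))
        dsimp only at this
        linarith
  have hsum : ∑ i, w' i = ∑ i, w i +
      ε • (EuclideanSpace.single v 1 - EuclideanSpace.single u₀ 1) := by
    simp only [w', sum_add_distrib, ← smul_sum, sum_pathShift, hlast]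
  have hdecr : surplus (∑ i, x i) (∑ i, w' i) = surplus (∑ i, x i) (∑ i, w i) - ε := by
    rw [hsum]
    exact surplus_add_smul_single_sub_single hε.le ((min_le_left _ _).trans (min_le_left _ _))
      ((min_le_left _ _).trans (min_le_right _ _)) (by rintro rfl; linarith)
  refine ⟨w', hw', by linarith, fun i u => ?_⟩
  rw [hdecr, sub_sub_cancel]
  simpa [w', abs_mul, abs_of_pos hε] using
    mul_le_of_le_one_right hε.le (abs_pathShift_le_one blk hnodup i u)

theorem exists_mem_basePolytope_sum_eq_abs_sub_le (hF : ∀ i, Submodular (F i))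
    (hF0 : ∀ i, F i ∅ = 0) {x y : ι → EuclideanSpace ℝ (Fin n)}
    (hx : ∀ i, x i ∈ basePolytope n (F i)) (hy : ∀ i, y i ∈ basePolytope n (F i)) :
    ∃ z : ι → EuclideanSpace ℝ (Fin n), (∀ i, z i ∈ basePolytope n (F i)) ∧
      ∑ i, z i = ∑ i, x i ∧ ∀ i u, |z i u - y i u| ≤ surplus (∑ i, x i) (∑ i, y i) := by
  set D : (ι → EuclideanSpace ℝ (Fin n)) → ℝ := fun w => surplus (∑ i, x i) (∑ i, w i)
  have hD : Continuous D := (continuous_surplus _).comp (by fun_prop)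
  set W := {w : ι → EuclideanSpace ℝ (Fin n) | ∀ i u, |w i u - y i u| ≤ D y - D w}
  have hW : IsClosed W := by
    simp only [W, Set.ofPred_forall]
    exact isClosed_iInter fun i => isClosed_iInter fun u =>
      isClosed_le (by fun_prop) (continuous_const.sub hD)
  have hK : IsCompact ((Set.univ.pi fun i => basePolytope n (F i)) ∩ W) :=
    (isCompact_univ_pi fun i => isCompact_basePolytope (F i)).inter_right hW
  obtain ⟨z, ⟨hz, hzW⟩, hmin⟩ :=
    hK.exists_isMinOn ⟨y, Set.mem_univ_pi.2 hy, fun i u => by simp⟩ hD.continuousOn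
  rw [Set.mem_univ_pi] at hz
  have hDz : D z = 0 := by
    by_contra hne
    obtain ⟨w', hw', hlt, hclose⟩ := exists_mem_basePolytope_surplus_lt hF hF0 hx hz
      ((surplus_nonneg _ _).lt_of_ne' hne)
    have hw'W : w' ∈ W := fun i u =>
      calc |w' i u - y i u| ≤ |w' i u - z i u| + |z i u - y i u| := abs_sub_le _ _ _
        _ ≤ (D z - D w') + (D y - D z) := add_le_add (hclose i u) (hzW i u)
        _ = D y - D w' := by ring
    exact hlt.not_ge (hmin ⟨Set.mem_univ_pi.2 hw', hw'W⟩)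
  refine ⟨z, hz, eq_of_surplus_eq_zero hDz ?_, fun i u => ?_⟩
  · rw [sum_apply_sum_of_mem_basePolytope hx, sum_apply_sum_of_mem_basePolytope hz]
  · simpa [hDz] using hzW i u

end Augmentation

theorem norm_sq_le_of_forall_abs_le {ι κ : Type*} [Fintype ι] [Fintype κ]
    (v : PiLp 2 fun _ : ι => EuclideanSpace ℝ κ) {T : ℝ} (hv : ∀ i u, |v i u| ≤ T) :
    ‖v‖ ^ 2 ≤ Fintype.card ι * Fintype.card κ * T ^ 2 := by
  rw [PiLp.norm_sq_eq_of_L2]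
  simp only [EuclideanSpace.real_norm_sq_eq]
  calc ∑ i, ∑ u, v i u ^ 2 ≤ ∑ i : ι, ∑ u : κ, T ^ 2 :=
        sum_le_sum fun i _ => sum_le_sum fun u _ => sq_le_sq.2 ((hv i u).trans (le_abs_self T))
    _ = Fintype.card ι * Fintype.card κ * T ^ 2 := by simp [mul_assoc]

theorem inner_gradg_sub {r : ℕ} (x y : Vec n r) :
    ⟪gradg n r y, x - y⟫ = g n r x - g n r y - ‖∑ i, x i - ∑ i, y i‖ ^ 2 := by
  have hinner : ⟪gradg n r y, x - y⟫ = 2 * ⟪∑ i, y i, ∑ i, x i - ∑ i, y i⟫ := by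
    calc ⟪gradg n r y, x - y⟫ = ∑ i, ⟪(2 : ℝ) • ∑ j, y j, x i - y i⟫ := PiLp.inner_apply _ _
      _ = 2 * ⟪∑ i, y i, ∑ i, x i - ∑ i, y i⟫ := by
        rw [← inner_sum, sum_sub_distrib, real_inner_smul_left]
  rw [hinner, g, g, norm_sub_sq_real, inner_sub_right, real_inner_self_eq_norm_sq,
    real_inner_comm]
  ring

end ProxDSM

open ProxDSM

theorem statement7_general (n r : ℕ)
    (F : Fin r → Finset (Fin n) → ℝ)
    (hsub : ∀ i, Submodular (F i)) (hnorm : ∀ i, F i ∅ = 0)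
    (y ystar : Vec n r) (hy : y ∈ feas n r F)
    (hopt : IsOptimal n r F ystar)
    (hclosest : ∀ z : Vec n r, IsOptimal n r F z → ‖y - ystar‖ ≤ ‖y - z‖) :
    ⟪gradg n r y, ystar - y⟫
      ≤ (g n r ystar - g n r y) - (1 / ((n : ℝ) ^ 2 * r)) * ‖y - ystar‖ ^ 2 := by
  obtain ⟨z, hz, hsum, hclose⟩ := exists_mem_basePolytope_sum_eq_abs_sub_le hsub hnorm hopt.1 hy
  have hzopt : IsOptimal n r F (WithLp.toLp 2 z) :=
    ⟨hz, fun w hw => by simpa [g, hsum] using hopt.2 w hw⟩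
  have hdist : ‖y - ystar‖ ^ 2 ≤ (n ^ 2 * r) * ‖∑ i, ystar i - ∑ i, y i‖ ^ 2 :=
    calc ‖y - ystar‖ ^ 2 ≤ ‖y - WithLp.toLp 2 z‖ ^ 2 := by gcongr; exact hclosest _ hzopt
      _ ≤ r * n * surplus (∑ i, ystar i) (∑ i, y i) ^ 2 := by
        simpa using norm_sq_le_of_forall_abs_le (y - WithLp.toLp 2 z) fun i u => by
          simpa [abs_sub_comm] using hclose i u
      _ ≤ r * n * (n * ‖∑ i, y i - ∑ i, ystar i‖ ^ 2) := by gcongr; exact sq_surplus_le _ _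
      _ = (n ^ 2 * r) * ‖∑ i, ystar i - ∑ i, y i‖ ^ 2 := by rw [norm_sub_rev]; ring
  have hscaled : 1 / ((n : ℝ) ^ 2 * r) * ‖y - ystar‖ ^ 2 ≤ ‖∑ i, ystar i - ∑ i, y i‖ ^ 2 := by
    -- if `n = 0` or `r = 0` the coefficient is `1 / 0 = 0`
    rcases (by positivity : 0 ≤ (n : ℝ) ^ 2 * r).eq_or_lt with h | h
    · rw [← h, div_zero, zero_mul]; positivity
    · rwa [one_div, inv_mul_le_iff₀ h]
  rw [inner_gradg_sub]
  linarith

/-- For `y ∈ 𝒴` and `y*` an optimal solution of (Prox-DSM) closest to `y`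
(so `g(y*)` is the optimal value `g*`),
`⟨∇g(y), y* - y⟩ ≤ (g* - g(y)) - (1/(n²r))‖y - y*‖²`. -/
theorem statement7 (n r : ℕ) (hn : 1 ≤ n) (hr : 1 ≤ r)
    (F : Fin r → Finset (Fin n) → ℝ)
    (hsub : ∀ i, Submodular (F i)) (hnorm : ∀ i, F i ∅ = 0)
    (y ystar : Vec n r) (hy : y ∈ feas n r F)
    (hopt : IsOptimal n r F ystar)
    (hclosest : ∀ z : Vec n r, IsOptimal n r F z → ‖y - ystar‖ ≤ ‖y - z‖) :
    ⟪gradg n r y, ystar - y⟫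
      ≤ (g n r ystar - g n r y) - (1 / ((n : ℝ) ^ 2 * r)) * ‖y - ystar‖ ^ 2 :=
  statement7_general n r F hsub hnorm y ystar hy hopt hclosest
end
end
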